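/- arXiv:2507.06985 — 4 statements merged into one kernel-verified Lean document; each statement's English description precedes it below -/
import Mathlib

section
/- Suppose β1, β2 are real numbers with 0 ≤ β1 + β2 − 1 ≤ 2β1β2. Then for every real z ≤ 0, |g1(z)| ≤ |g2(z)|, where g1(z) = (β1β2−β1−β2+1)z² + (2−β1−β2)z + 2 and g2(z) = β1β2 z² − (β1+β2)z + 2. -/
theorem stmt_9 (β1 β2 : ℝ) (h1 : 0 ≤ β1 + β2 - 1) (h2 : β1 + β2 - 1 ≤ 2*β1*β2) :
    ∀ z : ℝ, z ≤ 0 →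
      |(β1*β2 - β1 - β2 + 1)*z^2 + (2 - β1 - β2)*z + 2|
        ≤ |β1*β2*z^2 - (β1 + β2)*z + 2| := by
  intro z hz
  set g1 := (β1*β2 - β1 - β2 + 1)*z^2 + (2 - β1 - β2)*z + 2 with hg1
  set g2 := β1*β2*z^2 - (β1 + β2)*z + 2 with hg2
  have hsq : 0 ≤ z^2 := sq_nonneg z
  have hA : 0 ≤ g2 - g1 := by
    have : g2 - g1 = (β1 + β2 - 1)*z^2 - 2*z := by ring
    nlinarith [mul_nonneg h1 hsq]
  have hB : 0 ≤ g2 + g1 := by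
    have : g2 + g1 = (2*β1*β2 - (β1 + β2 - 1))*z^2 - 2*(β1 + β2 - 1)*z + 4 := by ring
    nlinarith [mul_nonneg (by linarith : (0:ℝ) ≤ 2*β1*β2 - (β1 + β2 - 1)) hsq,
      mul_nonpos_of_nonneg_of_nonpos h1 hz]
  calc |g1| ≤ g2 := abs_le.mpr ⟨by linarith, by linarith⟩
  _ ≤ |g2| := le_abs_self g2
end

section
/- Suppose β1, β2 are real numbers with 0 ≤ β1 + β2 − 1 ≤ 2β1β2. Then for every complex z with Re(z) ≤ 0, |g1(z)| ≤ |g2(z)|, where g1(z) = (β1β2−β1−β2+1)z² + (2−β1−β2)z + 2 and g2(z) = β1β2 z² − (β1+β2)z + 2. In particular the second-order one-step scheme is A-stable. -/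
set_option maxHeartbeats 1000000


theorem stmt_11 (β1 β2 : ℝ) (h1 : 0 ≤ β1 + β2 - 1) (h2 : β1 + β2 - 1 ≤ 2*β1*β2) :
    ∀ z : ℂ, z.re ≤ 0 →
      ‖((β1*β2 - β1 - β2 + 1) : ℂ)*z^2 + ((2 - β1 - β2) : ℂ)*z + 2‖
        ≤ ‖((β1*β2) : ℂ)*z^2 - ((β1 + β2) : ℂ)*z + 2‖ := by
  intro z hz
  simp only [Complex.norm_def]
  apply Real.sqrt_le_sqrt
  set x := z.re with hxdef
  set y := z.im with hydef
  have hx : 0 ≤ -x := by linarith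
  have h2' : 0 ≤ 2*β1*β2 - (β1+β2-1) := by linarith
  have f2 : 0 ≤ (β1+β2-1) * x^2 := mul_nonneg h1 (sq_nonneg x)
  have f3 : 0 ≤ (β1+β2-1) * (x^2+y^2)^2 * (2*β1*β2 - (β1+β2-1)) :=
    mul_nonneg (mul_nonneg h1 (sq_nonneg _)) h2'
  have f4 : 0 ≤ (-x) * (x^2+y^2) *
      (2*(2*β1*β2-(β1+β2-1)) + 2*(β1+β2-1)^2) := by
    apply mul_nonneg (mul_nonneg hx (by positivity))
    nlinarith [sq_nonneg (β1+β2-1)]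
  simp only [Complex.normSq_apply, Complex.add_re, Complex.add_im, Complex.mul_re,
    Complex.mul_im, Complex.sub_re, Complex.sub_im, pow_two, Complex.ofReal_re,
    Complex.ofReal_im, Complex.one_re, Complex.one_im, Complex.re_ofNat, Complex.im_ofNat]
  linarith [hx, f2, f3, f4]
end

section
/- Let α1 ≤ 0, α2 ≥ 0, r ≥ 0 and θ ∈ [π/2, 3π/2]. Then α1α2 r⁴ + 2(α2² − α1) r³ cos θ − 4α2 r²(1 + cos 2θ) + 8r cos θ ≤ 0. -/
theorem stmt_12 (α1 α2 r θ : ℝ) (h1 : α1 ≤ 0) (h2 : 0 ≤ α2) (hr : 0 ≤ r)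
    (hθ : θ ∈ Set.Icc (Real.pi / 2) (3 * Real.pi / 2)) :
    α1*α2*r^4 + 2*(α2^2 - α1)*r^3*Real.cos θ
      - 4*α2*r^2*(1 + Real.cos (2*θ)) + 8*r*Real.cos θ ≤ 0 := by
  obtain ⟨hθ1, hθ2⟩ := hθ
  have hc : Real.cos θ ≤ 0 :=
    Real.cos_nonpos_of_pi_div_two_le_of_le hθ1 (by linarith [Real.pi_pos])
  have h2θ : 1 + Real.cos (2*θ) = 2 * Real.cos θ ^ 2 := by
    rw [Real.cos_two_mul]; ring
  rw [h2θ]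
  have hc2 : 0 ≤ Real.cos θ ^ 2 := sq_nonneg _
  have ha : 0 ≤ α2^2 - α1 := by nlinarith [sq_nonneg α2]
  nlinarith [mul_nonneg (mul_nonneg hr hr) (mul_nonneg hr hr),
    mul_nonneg (mul_nonneg ha (mul_nonneg (mul_nonneg hr hr) hr)) (neg_nonneg.2 hc),
    mul_nonneg (mul_nonneg h2 (mul_nonneg hr hr)) hc2,
    mul_nonneg hr (neg_nonneg.2 hc), mul_nonneg h2 (neg_nonneg.2 h1)]
end

section
/- Suppose β1, β2 are real numbers with β1 + β2 − 1 > 0 and (β1−1)(β2−1) = 0. Then β1β2 > 0, the scheme is A-stable (0 ≤ β1+β2−1 ≤ 2β1β2 holds), and lim_{z→−∞} g1(z)/g2(z) = 0, where g1(z) = (2−β1−β2)z + 2 and g2(z) = β1β2 z² − (β1+β2)z + 2. Hence the scheme is L-stable. -/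
open Filter Topology

lemma aux_tendsto (a b s : ℝ) (hb : 0 < b) :
    Tendsto (fun z : ℝ => (a*z + 2) / (b*z^2 - s*z + 2)) atBot (nhds 0) := by
  have hinv : Tendsto (fun z : ℝ => z⁻¹) atBot (nhds 0) := by
    have h := (tendsto_inv_atTop_zero (𝕜 := ℝ)).comp tendsto_neg_atBot_atTop
    have h2 : Tendsto (fun z : ℝ => -(-z)⁻¹) atBot (nhds 0) := by
      simpa using h.neg
    simpa [inv_neg] using h2
  have hnum : Tendsto (fun z : ℝ => a * z⁻¹ + 2 * (z⁻¹)^2) atBot (nhds 0) := by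
    have := ((hinv.const_mul a).add ((hinv.pow 2).const_mul 2))
    simpa using this
  have hden : Tendsto (fun z : ℝ => b - s * z⁻¹ + 2 * (z⁻¹)^2) atBot (nhds b) := by
    have := ((tendsto_const_nhds (x := b)).sub (hinv.const_mul s)).add ((hinv.pow 2).const_mul 2)
    simpa using this
  have hdiv := hnum.div hden (ne_of_gt hb)
  rw [zero_div] at hdiv
  refine hdiv.congr' ?_
  filter_upwards [eventually_lt_atBot (0:ℝ)] with z hz
  have hz0 : z ≠ 0 := ne_of_lt hz
  have hz2 : z^2 ≠ 0 := pow_ne_zero 2 hz0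
  have e1 : a * z⁻¹ + 2 * (z⁻¹)^2 = (a*z + 2) / z^2 := by
    field_simp
  have e2 : b - s * z⁻¹ + 2 * (z⁻¹)^2 = (b*z^2 - s*z + 2) / z^2 := by
    field_simp
  simp only [Pi.div_apply]
  rw [e1, e2, div_div_div_cancel_right₀ hz2]

theorem stmt_13 (β1 β2 : ℝ) (h1 : β1 + β2 - 1 > 0) (h2 : (β1 - 1)*(β2 - 1) = 0) :
    0 < β1*β2 ∧ (0 ≤ β1 + β2 - 1 ∧ β1 + β2 - 1 ≤ 2*β1*β2) ∧
    Filter.Tendsto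
      (fun z : ℝ => ((2 - β1 - β2)*z + 2) / (β1*β2*z^2 - (β1 + β2)*z + 2))
      Filter.atBot (nhds 0) := by
  have hb : 0 < β1*β2 ∧ β1 + β2 - 1 ≤ 2*β1*β2 := by
    rcases mul_eq_zero.mp h2 with h | h
    · have hβ1 : β1 = 1 := by linarith
      subst hβ1
      constructor <;> nlinarith
    · have hβ2 : β2 = 1 := by linarith
      subst hβ2
      constructor <;> nlinarith
  refine ⟨hb.1, ⟨le_of_lt h1, hb.2⟩, ?_⟩
  have := aux_tendsto (2 - β1 - β2) (β1*β2) (β1 + β2) hb.1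
  exact this
end
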